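/- arXiv:1509.00541 — 7 statements merged into one kernel-verified Lean document; each statement's English description precedes it below -/
import Mathlib

section
/- Let p_1, …, p_r be positive integers and let S be a linear subspace of ℂ^{p_1} ⊗ ⋯ ⊗ ℂ^{p_r} that contains no nonzero decomposable tensor (i.e., no nonzero vector of the form v_1 ⊗ ⋯ ⊗ v_r). Then dim S ≤ ∏_{i=1}^r p_i − ∑_{i=1}^r p_i + r − 1. -/
/-!
Let `m` be the codimension of `S` in `V = ⨂ i, ℂ^{p i}` and `D = ∑ i, (p i - 1)`. The `m`
coordinates of `V ⧸ S` become `m` multilinear forms `f j` in block variables `x i j`, and it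
suffices to find a common zero of the `f j` with no vanishing block. If there is none, the
Nullstellensatz puts a power `k` of every transversal monomial `x 1 (J 1) ⋯ x r (J r)` into the
ideal `(f j)`. By pigeonhole, every monomial of multidegree `(d + 1, …, d + 1)` with
`d ≥ k * max p` is then divisible by such a power, so the space `W d` of polynomials of
multidegree `(d, …, d)` satisfies `W (d + 1) ⊆ ∑ j, f j • W d`. Iterating, `dim W (d₀ + s)` is at
most the number of monomials of degree `s` in the `f j` times `dim W d₀`, which grows like
`s ^ (m - 1)`, whereas the monomials with prescribed exponents in the first `p i - 1` variables
of each block show that it grows like `s ^ D`. Hence `m > D`.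
-/

open scoped TensorProduct

open MvPolynomial Finset.Nat

theorem Submodule.finrank_finset_sup_le_sum {K V ι : Type*} [DivisionRing K] [AddCommGroup V]
    [Module K V] (t : Finset ι) (N : ι → Submodule K V) [∀ i, FiniteDimensional K (N i)] :
    Module.finrank K (t.sup N : Submodule K V) ≤ ∑ i ∈ t, Module.finrank K (N i) := by
  classical
  induction t using Finset.induction_on with
  | empty => simp
  | insert a t ha ih =>
    rw [Finset.sup_insert, Finset.sum_insert ha]
    exact (Submodule.finrank_add_le_finrank_add_finrank _ _).trans (Nat.add_le_add_left ih _)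

theorem Finset.Nat.card_antidiagonalTuple_succ_le (m s : ℕ) :
    (antidiagonalTuple (m + 1) s).card ≤ (s + 1) ^ m := by
  calc (antidiagonalTuple (m + 1) s).card
      ≤ (Fintype.piFinset fun _ : Fin m => range (s + 1)).card := by
        refine card_le_card_of_injOn Fin.tail (fun a ha => ?_) fun a ha b hb hab => ?_
        · rw [mem_coe, mem_antidiagonalTuple, Fin.sum_univ_succ] at ha
          rw [mem_coe, Fintype.mem_piFinset]
          intro j
          rw [mem_range]
          have := single_le_sum (fun j _ => Nat.zero_le _) (mem_univ j) (f := Fin.tail a)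
          simp only [Fin.tail] at this ⊢
          omega
        · rw [mem_coe, mem_antidiagonalTuple, Fin.sum_univ_succ] at ha hb
          have h0 : a 0 = b 0 := by
            have : ∑ j : Fin m, a j.succ = ∑ j : Fin m, b j.succ := by
              simp only [← Fin.tail_def, hab]
            omega
          rw [← Fin.cons_self_tail a, ← Fin.cons_self_tail b, h0, hab]
    _ = (s + 1) ^ m := by simp

theorem Nat.exists_pow_mul_lt_pow {Q E m D : ℕ} (hQ : 1 ≤ Q) (hmD : m < D) :
    ∃ t, (Q * t + 1) ^ m * E < (t + 1) ^ D := by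
  refine ⟨Q ^ m * E, ?_⟩
  set t := Q ^ m * E
  calc (Q * t + 1) ^ m * E ≤ (Q * (t + 1)) ^ m * E := by gcongr; nlinarith
    _ = t * (t + 1) ^ m := by rw [mul_pow]; ring
    _ < (t + 1) ^ (m + 1) := by rw [pow_succ']; gcongr; omega
    _ ≤ (t + 1) ^ D := Nat.pow_le_pow_right (by omega) hmD

theorem PiTensorProduct.tprod_ne_zero {ι R : Type*} [Fintype ι] [CommRing R] [IsDomain R]
    {M : ι → Type*} [∀ i, AddCommGroup (M i)] [∀ i, Module R (M i)] [∀ i, Module.Free R (M i)]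
    {v : ∀ i, M i} (hv : ∀ i, v i ≠ 0) : tprod R v ≠ 0 := by
  let b i := Module.Free.chooseBasis R (M i)
  have : ∀ i, ∃ j, (b i).repr (v i) j ≠ 0 := fun i =>
    DFunLike.ne_iff.mp ((b i).repr.map_ne_zero_iff.mpr (hv i))
  choose J hJ using this
  have : (Basis.piTensorProduct b).repr (tprod R v) J ≠ 0 := by
    rw [Basis.piTensorProduct_repr_tprod_apply]
    exact Finset.prod_ne_zero_iff.mpr fun i _ => hJ i
  exact fun h => this (by simp [h])

theorem MvPolynomial.weightedHomogeneousComponent_mul_of_isWeightedHomogeneous_right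
    {σ R M : Type*} [CommSemiring R] [AddCancelCommMonoid M] {w : σ → M} {e : M}
    {f : MvPolynomial σ R} (hf : f.IsWeightedHomogeneous w e) (n : M) (g : MvPolynomial σ R) :
    weightedHomogeneousComponent w (n + e) (g * f) = weightedHomogeneousComponent w n g * f := by
  classical
  let := weightedGradedAlgebra R w
  have := DirectSum.coe_decompose_mul_add_of_right_mem (weightedHomogeneousSubmodule R w)
    (i := n) (a := g) hf
  simp only [← weightedDecomposition.decompose'_apply]
  exact this

theorem MvPolynomial.mem_iSup_map_mulRight_of_mem_span {σ R M ι : Type*} [CommSemiring R]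
    [AddCancelCommMonoid M] [Fintype ι] {w : σ → M} {e n : M} {f : ι → MvPolynomial σ R}
    (hf : ∀ j, (f j).IsWeightedHomogeneous w e) {h : MvPolynomial σ R}
    (hI : h ∈ Ideal.span (Set.range f)) (hh : h.IsWeightedHomogeneous w (n + e)) :
    h ∈ ⨆ j, (weightedHomogeneousSubmodule R w n).map (LinearMap.mulRight R (f j)) := by
  obtain ⟨g, rfl⟩ := Ideal.mem_span_range_iff_exists_fun.mp hI
  rw [← weightedHomogeneousComponent_eq_self hh, map_sum]
  refine Submodule.sum_mem _ fun j _ => Submodule.mem_iSup_of_mem j ⟨_,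
    weightedHomogeneousComponent_mem w (g j) n, ?_⟩
  rw [weightedHomogeneousComponent_mul_of_isWeightedHomogeneous_right (hf j)]
  rfl

theorem Submodule.le_sup_map_mulRight_prod_pow {R A : Type*} [CommSemiring R] [CommSemiring A]
    [Algebra R A] {m : ℕ} (f : Fin m → A) (W : ℕ → Submodule R A) {d₀ : ℕ}
    (hW : ∀ d ≥ d₀, W (d + 1) ≤ ⨆ j, (W d).map (LinearMap.mulRight R (f j))) (s : ℕ) :
    W (d₀ + s) ≤ (antidiagonalTuple m s).sup fun a =>
      (W d₀).map (LinearMap.mulRight R (∏ j, f j ^ a j)) := by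
  classical
  induction s with
  | zero =>
    have h0 : (0 : Fin m → ℕ) ∈ antidiagonalTuple m 0 := mem_antidiagonalTuple.mpr (by simp)
    refine le_trans ?_ (Finset.le_sup h0)
    simp
  | succ s ih =>
    refine (hW (d₀ + s) (by omega)).trans (iSup_le fun j => ?_)
    rw [Submodule.map_le_iff_le_comap]
    refine ih.trans (Finset.sup_le fun a ha => ?_)
    rw [← Submodule.map_le_iff_le_comap, ← Submodule.map_comp, ← LinearMap.mulRight_mul]
    have hmem : a + Pi.single j 1 ∈ antidiagonalTuple m (s + 1) := by
      rw [mem_antidiagonalTuple] at ha ⊢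
      simp [Finset.sum_add_distrib, ha]
    have hprod : ∏ i, f i ^ (a + Pi.single j 1 : Fin m → ℕ) i = (∏ i, f i ^ a i) * f j := by
      simp only [Pi.add_apply, pow_add, Finset.prod_mul_distrib]
      congr 1
      simp [Pi.single_apply, pow_ite]
    refine le_trans (le_of_eq ?_) (Finset.le_sup hmem)
    rw [hprod]

theorem Submodule.finrank_add_le_of_le_iSup_map_mulRight {K A : Type*} [Field K] [CommRing A]
    [Algebra K A] {m : ℕ} (f : Fin (m + 1) → A) (W : ℕ → Submodule K A)
    [∀ d, FiniteDimensional K (W d)] {d₀ : ℕ}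
    (hW : ∀ d ≥ d₀, W (d + 1) ≤ ⨆ j, (W d).map (LinearMap.mulRight K (f j))) (s : ℕ) :
    Module.finrank K (W (d₀ + s)) ≤ (s + 1) ^ m * Module.finrank K (W d₀) := by
  calc Module.finrank K (W (d₀ + s))
      ≤ Module.finrank K ((antidiagonalTuple (m + 1) s).sup fun a =>
          (W d₀).map (LinearMap.mulRight K (∏ j, f j ^ a j)) : Submodule K A) :=
        Submodule.finrank_mono (Submodule.le_sup_map_mulRight_prod_pow f W hW s)
    _ ≤ ∑ a ∈ antidiagonalTuple (m + 1) s,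
          Module.finrank K ((W d₀).map (LinearMap.mulRight K (∏ j, f j ^ a j))) :=
        Submodule.finrank_finset_sup_le_sum _ _
    _ ≤ ∑ _a ∈ antidiagonalTuple (m + 1) s, Module.finrank K (W d₀) :=
        Finset.sum_le_sum fun _ _ => Submodule.finrank_map_le _ _
    _ ≤ (s + 1) ^ m * Module.finrank K (W d₀) := by
      rw [Finset.sum_const, smul_eq_mul]
      exact Nat.mul_le_mul_right _ (card_antidiagonalTuple_succ_le m s)

namespace Multihomogeneous

variable {K : Type*} [Field K] {ι : Type*} [Fintype ι] {p : ι → ℕ}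

variable (p) in
abbrev Var := Σ i, Fin (p i)

variable (p) in
noncomputable def padExponent (d : ℕ) (a : ∀ i, Fin (p i - 1) → ℕ) : Var p →₀ ℕ :=
  Finsupp.equivFunOnFinite.symm fun s =>
    if h : (s.2 : ℕ) < p s.1 - 1 then a s.1 ⟨s.2, h⟩ else d - ∑ j, a s.1 j

theorem padExponent_injective (d : ℕ) : Function.Injective (padExponent p d) := by
  intro a b hab
  funext i j
  simpa [padExponent, j.isLt] using
    DFunLike.congr_fun hab ⟨i, Fin.castLE (Nat.sub_le _ _) j⟩

theorem sum_padExponent (hp : ∀ i, 1 ≤ p i) {d : ℕ} {a : ∀ i, Fin (p i - 1) → ℕ} (i : ι)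
    (ha : ∑ j, a i j ≤ d) : ∑ j, padExponent p d a ⟨i, j⟩ = d := by
  have hrange : Finset.range (p i) = Finset.range (p i - 1 + 1) := by
    rw [Nat.sub_add_cancel (hp i)]
  have hsum := Fin.sum_univ_eq_sum_range
    (fun n => if h : n < p i - 1 then a i ⟨n, h⟩ else d - ∑ j, a i j) (p i)
  rw [hrange, Finset.sum_range_succ, ← Fin.sum_univ_eq_sum_range] at hsum
  simp only [Fin.is_lt, dif_pos, lt_irrefl, dif_neg, not_false_eq_true, Fin.eta] at hsum
  simp only [padExponent, Finsupp.coe_equivFunOnFinite_symm]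
  omega

theorem prod_X_pow_dvd_monomial {k : ℕ} (J : ∀ i, Fin (p i)) {u : Var p →₀ ℕ}
    (hu : ∀ i, k ≤ u ⟨i, J i⟩) (c : K) :
    (∏ i, X ⟨i, J i⟩ : MvPolynomial (Var p) K) ^ k ∣ monomial u c := by
  rw [monomial_eq, Finsupp.prod_fintype _ _ (by simp), ← Finset.prod_pow, Fintype.prod_sigma]
  have hblock (i : ι) :
      (X ⟨i, J i⟩ : MvPolynomial (Var p) K) ^ k ∣ ∏ j, X ⟨i, j⟩ ^ u ⟨i, j⟩ := by
    refine (pow_dvd_pow _ (hu i)).trans ?_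
    exact Finset.dvd_prod_of_mem (fun j => (X ⟨i, j⟩ : MvPolynomial (Var p) K) ^ u ⟨i, j⟩)
      (Finset.mem_univ (J i))
  exact (Finset.prod_dvd_prod_of_dvd _ _ fun i _ => hblock i).mul_left _

theorem prod_X_mem_radical [IsAlgClosed K] {I : Ideal (MvPolynomial (Var p) K)}
    (hI : ∀ x ∈ zeroLocus K I, ∃ i, ∀ j, x ⟨i, j⟩ = 0) (J : ∀ i, Fin (p i)) :
    ∏ i, X ⟨i, J i⟩ ∈ I.radical := by
  rw [← vanishingIdeal_zeroLocus_eq_radical (K := K), mem_vanishingIdeal_iff]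
  intro x hx
  obtain ⟨i, hi⟩ := hI x hx
  simpa using Finset.prod_eq_zero (Finset.mem_univ i) (hi (J i))

variable [DecidableEq ι]

variable (p) in
def blockWeight : Var p → ι → ℕ := fun s => Pi.single s.1 1

theorem weight_blockWeight_apply (ν : Var p →₀ ℕ) (i : ι) :
    Finsupp.weight (blockWeight p) ν i = ∑ j, ν ⟨i, j⟩ := by
  rw [Finsupp.weight_apply, Finsupp.sum_fintype _ _ (by simp), Finset.sum_apply,
    Fintype.sum_sigma, Finset.sum_eq_single i (fun i' _ hi' => by simp [blockWeight, hi'])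
      (by simp)]
  simp [blockWeight]

variable (K p) in
def blockHomogeneous (d : ℕ) : Submodule K (MvPolynomial (Var p) K) :=
  weightedHomogeneousSubmodule K (blockWeight p) fun _ => d

theorem blockHomogeneous_le_restrictDegree (d : ℕ) :
    blockHomogeneous K p d ≤ restrictDegree (Var p) K d := by
  intro h hh
  rw [mem_restrictDegree]
  intro u hu s
  have hblock := congrFun (hh (mem_support_iff.mp hu)) s.1
  rw [weight_blockWeight_apply] at hblock
  exact hblock ▸ Finset.single_le_sum (f := fun j => u ⟨s.1, j⟩) (by simp) (Finset.mem_univ s.2)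

instance (d : ℕ) : FiniteDimensional K (blockHomogeneous K p d) :=
  Submodule.finiteDimensional_of_le (blockHomogeneous_le_restrictDegree d)

theorem pow_le_finrank_blockHomogeneous (hp : ∀ i, 1 ≤ p i) {c d : ℕ}
    (hcd : ∀ i, (p i - 1) * c ≤ d) :
    (c + 1) ^ ∑ i, (p i - 1) ≤ Module.finrank K (blockHomogeneous K p d) := by
  let e : (∀ i, Fin (p i - 1) → Fin (c + 1)) → Var p →₀ ℕ :=
    fun a => padExponent p d fun i j => a i j
  have he : Function.Injective e := (padExponent_injective d).comp fun a b h => by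
    funext i j; exact Fin.ext (congrFun (congrFun h i) j)
  have hmem : ∀ a, monomial (e a) (1 : K) ∈ blockHomogeneous K p d := fun a =>
    isWeightedHomogeneous_monomial _ _ _ <| funext fun i => by
      rw [weight_blockWeight_apply, sum_padExponent hp i]
      calc ∑ j, (a i j : ℕ) ≤ ∑ _j : Fin (p i - 1), c :=
            Finset.sum_le_sum fun j _ => Nat.lt_succ_iff.mp (a i j).isLt
        _ ≤ d := by simpa using hcd i
  have hli : LinearIndependent K fun a => monomial (e a) (1 : K) := by
    simpa [Function.comp_def] using (basisMonomials (Var p) K).linearIndependent.comp e he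
  calc (c + 1) ^ ∑ i, (p i - 1) = Fintype.card (∀ i, Fin (p i - 1) → Fin (c + 1)) := by
        simp [Fintype.card_pi, Finset.prod_pow_eq_pow_sum]
    _ = Module.finrank K (Submodule.span K (Set.range fun a => monomial (e a) (1 : K))) :=
        (finrank_span_eq_card hli).symm
    _ ≤ Module.finrank K (blockHomogeneous K p d) :=
        Submodule.finrank_mono (Submodule.span_le.mpr (Set.range_subset_iff.mpr hmem))

theorem blockHomogeneous_succ_subset_ideal {I : Ideal (MvPolynomial (Var p) K)} {k d : ℕ}
    (hI : ∀ J : ∀ i, Fin (p i), (∏ i, X ⟨i, J i⟩) ^ k ∈ I) (hd : ∀ i, p i * k ≤ d) :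
    (blockHomogeneous K p (d + 1) : Set (MvPolynomial (Var p) K)) ⊆ I := by
  intro h hh
  rw [SetLike.mem_coe, as_sum h]
  refine I.sum_mem fun u hu => ?_
  have hJ : ∀ i, ∃ j, k < u ⟨i, j⟩ := fun i => by
    have hblock := congrFun (hh (mem_support_iff.mp hu)) i
    rw [weight_blockWeight_apply] at hblock
    simpa using Finset.exists_lt_of_sum_lt (s := Finset.univ) (f := fun _ => k)
      (g := fun j => u ⟨i, j⟩) (by simp only [Finset.sum_const, Finset.card_univ,
        Fintype.card_fin, smul_eq_mul, hblock]; linarith [hd i])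
  choose J hJ using hJ
  exact I.mem_of_dvd (prod_X_pow_dvd_monomial J (fun i => (hJ i).le) _) (hI J)

theorem exists_blocks_ne_zero_forall_eval_eq_zero [IsAlgClosed K] (hp : ∀ i, 1 ≤ p i) {m : ℕ}
    (hm : m ≤ ∑ i, (p i - 1)) (f : Fin m → MvPolynomial (Var p) K)
    (hf : ∀ j, f j ∈ blockHomogeneous K p 1) :
    ∃ x : Var p → K, (∀ i, ∃ j, x ⟨i, j⟩ ≠ 0) ∧ ∀ j, eval x (f j) = 0 := by
  by_contra! hcon
  obtain _ | m := m
  · obtain ⟨j, -⟩ := hcon 1 fun i => ⟨⟨0, hp i⟩, one_ne_zero⟩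
    exact j.elim0
  set I := Ideal.span (Set.range f)
  have hrad := prod_X_mem_radical (I := I) fun x hx => by
    by_contra! hx0
    obtain ⟨j, hj⟩ := hcon x hx0
    exact hj (by simpa using hx (f j) (Ideal.subset_span ⟨j, rfl⟩))
  obtain ⟨k, hk⟩ := Ideal.exists_radical_pow_le_of_fg I (IsNoetherian.noetherian _)
  set Q := ∑ i, (p i - 1) + 1
  have hpQ : ∀ i, p i ≤ Q := fun i => by
    have := Finset.single_le_sum (f := fun i => p i - 1) (by simp) (Finset.mem_univ i)
    omega
  have hstep : ∀ d ≥ Q * k, blockHomogeneous K p (d + 1) ≤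
      ⨆ j, (blockHomogeneous K p d).map (LinearMap.mulRight K (f j)) := fun d hd h hh =>
    mem_iSup_map_mulRight_of_mem_span hf
      (blockHomogeneous_succ_subset_ideal (fun J => hk (Ideal.pow_mem_pow (hrad J) k))
        (fun i => (Nat.mul_le_mul_right k (hpQ i)).trans hd) hh) hh
  obtain ⟨t, ht⟩ := Nat.exists_pow_mul_lt_pow (Q := Q)
    (E := Module.finrank K (blockHomogeneous K p (Q * k))) (Nat.le_add_left 1 _) hm
  have hlow := pow_le_finrank_blockHomogeneous (K := K) hp (c := t) (d := Q * k + Q * t)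
    fun i => (Nat.mul_le_mul_right t ((Nat.sub_le _ _).trans (hpQ i))).trans
      (Nat.le_add_left _ _)
  have hup := Submodule.finrank_add_le_of_le_iSup_map_mulRight f _ hstep (Q * t)
  omega

variable (K p) in
noncomputable def tensorBasis : Module.Basis (∀ i, Fin (p i)) K (⨂[K] i, (Fin (p i) → K)) :=
  Basis.piTensorProduct fun i => Pi.basisFun K (Fin (p i))

noncomputable def ofFunctional (φ : (⨂[K] i, (Fin (p i) → K)) →ₗ[K] K) :
    MvPolynomial (Var p) K :=
  ∑ J, C (φ (tensorBasis K p J)) * ∏ i, X ⟨i, J i⟩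

theorem ofFunctional_mem_blockHomogeneous (φ : (⨂[K] i, (Fin (p i) → K)) →ₗ[K] K) :
    ofFunctional φ ∈ blockHomogeneous K p 1 := by
  refine Submodule.sum_mem _ fun J _ => ?_
  have := (isWeightedHomogeneous_C (blockWeight p) (φ (tensorBasis K p J))).mul
    (IsWeightedHomogeneous.prod Finset.univ _ _ fun i _ =>
      isWeightedHomogeneous_X K (blockWeight p) ⟨i, J i⟩)
  simp only [blockWeight, Finset.univ_sum_single, zero_add] at this
  exact this

theorem eval_ofFunctional (φ : (⨂[K] i, (Fin (p i) → K)) →ₗ[K] K) (x : Var p → K) :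
    eval x (ofFunctional φ) = φ (PiTensorProduct.tprod K fun i j => x ⟨i, j⟩) := by
  conv_rhs => rw [← (tensorBasis K p).sum_repr (PiTensorProduct.tprod K _)]
  simp [ofFunctional, tensorBasis, mul_comm]

end Multihomogeneous

open Multihomogeneous in
theorem exists_tprod_mem_of_finrank_quotient_le {K ι : Type*} [Field K] [IsAlgClosed K]
    [Fintype ι] {p : ι → ℕ} (hp : ∀ i, 1 ≤ p i) (S : Submodule K (⨂[K] i, (Fin (p i) → K)))
    (hS : Module.finrank K (_ ⧸ S) ≤ ∑ i, (p i - 1)) :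
    ∃ v : ∀ i, Fin (p i) → K, (∀ i, v i ≠ 0) ∧ PiTensorProduct.tprod K v ∈ S := by
  classical
  let b := Module.finBasis K (_ ⧸ S)
  obtain ⟨x, hx0, hx⟩ := exists_blocks_ne_zero_forall_eval_eq_zero hp hS
    (fun j => ofFunctional (b.coord j ∘ₗ S.mkQ)) fun j => ofFunctional_mem_blockHomogeneous _
  refine ⟨fun i j => x ⟨i, j⟩, fun i hi => ?_, ?_⟩
  · obtain ⟨j, hj⟩ := hx0 i
    exact hj (congrFun hi j)
  · rw [← Submodule.Quotient.mk_eq_zero, ← b.forall_coord_eq_zero_iff]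
    intro j
    simpa [eval_ofFunctional] using hx j

/-- (Parthasarathy) A subspace of `ℂ^{p 1} ⊗ ⋯ ⊗ ℂ^{p r}` containing no nonzero
decomposable tensor has dimension at most `∏ p i − ∑ p i + r − 1`. -/
theorem stmt_4 (r : ℕ) (p : Fin r → ℕ) (hp : ∀ i, 1 ≤ p i)
    (S : Submodule ℂ (⨂[ℂ] i : Fin r, (Fin (p i) → ℂ)))
    (hS : ∀ v : (i : Fin r) → (Fin (p i) → ℂ),
      PiTensorProduct.tprod ℂ v ∈ S → PiTensorProduct.tprod ℂ v = 0) :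
    (Module.finrank ℂ S : ℤ) ≤ (∏ i, (p i : ℤ)) - (∑ i, (p i : ℤ)) + r - 1 := by
  by_contra! hdim
  have hV : Module.finrank ℂ (⨂[ℂ] i : Fin r, (Fin (p i) → ℂ)) = ∏ i, p i := by
    simp [Module.finrank_eq_card_basis (Multihomogeneous.tensorBasis ℂ p), Fintype.card_pi]
  have hcodim : Module.finrank ℂ (_ ⧸ S) ≤ ∑ i, (p i - 1) := by
    have := S.finrank_quotient_add_finrank
    rw [hV] at this
    zify [hp] at this ⊢
    simp only [Finset.sum_sub_distrib, Finset.sum_const, Finset.card_univ, Fintype.card_fin,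
      nsmul_eq_mul, mul_one]
    linarith
  obtain ⟨v, hv, hvS⟩ := exists_tprod_mem_of_finrank_quotient_le hp S hcodim
  exact PiTensorProduct.tprod_ne_zero hv (hS v hvS)
end

section
/- For positive integers p_1, p_2, there exists a subspace S of ℂ^{p_1} ⊗ ℂ^{p_2} of dimension p_1 p_2 − p_1 − p_2 + 1 containing no nonzero decomposable tensor v_1 ⊗ v_2. -/
open scoped TensorProduct

open Polynomial

noncomputable def toPolyCE (p : ℕ) : (Fin p → ℂ) →ₗ[ℂ] ℂ[X] :=
  ∑ i : Fin p, (LinearMap.proj i : (Fin p → ℂ) →ₗ[ℂ] ℂ).smulRight (X ^ (i : ℕ))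

lemma toPolyCE_apply (p : ℕ) (v : Fin p → ℂ) :
    toPolyCE p v = ∑ i : Fin p, v i • X ^ (i : ℕ) := by
  simp [toPolyCE]

lemma toPolyCE_coeff (p : ℕ) (v : Fin p → ℂ) (j : Fin p) :
    (toPolyCE p v).coeff j = v j := by
  rw [toPolyCE_apply, Polynomial.finset_sum_coeff]
  rw [Finset.sum_eq_single j]
  · simp
  · intro i _ hij
    simp [Polynomial.coeff_X_pow, Fin.val_eq_val, hij.symm]
  · simp

lemma toPolyCE_eq_zero {p : ℕ} {v : Fin p → ℂ} (h : toPolyCE p v = 0) : v = 0 := by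
  funext j
  have := toPolyCE_coeff p v j
  rw [h] at this
  simpa using this.symm

lemma toPolyCE_degree_lt (p : ℕ) (v : Fin p → ℂ) :
    (toPolyCE p v).degree < (p : WithBot ℕ) := by
  rw [toPolyCE_apply]
  apply lt_of_le_of_lt (Polynomial.degree_sum_le _ _)
  rw [Finset.sup_lt_iff (by exact_mod_cast WithBot.bot_lt_coe p)]
  intro i _
  apply lt_of_le_of_lt (Polynomial.degree_smul_le _ _)
  rw [Polynomial.degree_X_pow]
  exact_mod_cast i.isLt

lemma toPolyCE_single (p : ℕ) (i : Fin p) :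
    toPolyCE p (Pi.single i 1) = X ^ (i : ℕ) := by
  rw [toPolyCE_apply, Finset.sum_eq_single i] <;> simp
  intro b hb
  simp [Pi.single_apply, hb]

noncomputable def ΦCE (p₁ p₂ : ℕ) :
    ((Fin p₁ → ℂ) ⊗[ℂ] (Fin p₂ → ℂ)) →ₗ[ℂ] ℂ[X] :=
  (LinearMap.mul' ℂ ℂ[X]) ∘ₗ TensorProduct.map (toPolyCE p₁) (toPolyCE p₂)

lemma ΦCE_tmul (p₁ p₂ : ℕ) (v : Fin p₁ → ℂ) (w : Fin p₂ → ℂ) :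
    ΦCE p₁ p₂ (v ⊗ₜ[ℂ] w) = toPolyCE p₁ v * toPolyCE p₂ w := by
  simp [ΦCE]

lemma ΦCE_range (p₁ p₂ : ℕ) (h₁ : 1 ≤ p₁) (h₂ : 1 ≤ p₂) :
    LinearMap.range (ΦCE p₁ p₂) = Polynomial.degreeLT ℂ (p₁ + p₂ - 1) := by
  apply le_antisymm
  · rintro x ⟨y, rfl⟩
    induction y using TensorProduct.induction_on with
    | zero => simp [Submodule.zero_mem]
    | tmul v w =>
      rw [ΦCE_tmul, Polynomial.mem_degreeLT]
      by_cases hv : toPolyCE p₁ v = 0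
      · simp only [hv, zero_mul, Polynomial.degree_zero]
        exact_mod_cast WithBot.bot_lt_coe _
      by_cases hw : toPolyCE p₂ w = 0
      · simp only [hw, mul_zero, Polynomial.degree_zero]
        exact_mod_cast WithBot.bot_lt_coe _
      have hdv : (toPolyCE p₁ v).natDegree < p₁ := by
        rw [Polynomial.natDegree_lt_iff_degree_lt hv]
        exact toPolyCE_degree_lt p₁ v
      have hdw : (toPolyCE p₂ w).natDegree < p₂ := by
        rw [Polynomial.natDegree_lt_iff_degree_lt hw]
        exact toPolyCE_degree_lt p₂ w
      have hne : toPolyCE p₁ v * toPolyCE p₂ w ≠ 0 := mul_ne_zero hv hw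
      rw [Polynomial.degree_eq_natDegree hne, Polynomial.natDegree_mul hv hw]
      exact_mod_cast by omega
    | add a b ha hb =>
      rw [map_add]
      exact Submodule.add_mem _ ha hb
  · rw [Polynomial.degreeLT_eq_span_X_pow, Submodule.span_le]
    rintro x hx
    simp only [Finset.coe_image, Set.mem_image, Finset.mem_coe, Finset.mem_range] at hx
    obtain ⟨k, hk, rfl⟩ := hx
    set i : ℕ := min k (p₁ - 1) with hi
    set j : ℕ := k - i with hj
    have hip : i < p₁ := by omega
    have hjp : j < p₂ := by omega
    have hij : i + j = k := by omega
    refine ⟨(Pi.single ⟨i, hip⟩ 1) ⊗ₜ[ℂ] (Pi.single ⟨j, hjp⟩ 1), ?_⟩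
    rw [ΦCE_tmul, toPolyCE_single, toPolyCE_single, ← pow_add]
    simp [hij]

/-- For positive integers `p₁, p₂` there is a completely entangled subspace of
`ℂ^{p₁} ⊗ ℂ^{p₂}` of dimension `p₁ p₂ − p₁ − p₂ + 1`. -/
theorem stmt_5 (p₁ p₂ : ℕ) (h₁ : 1 ≤ p₁) (h₂ : 1 ≤ p₂) :
    ∃ S : Submodule ℂ ((Fin p₁ → ℂ) ⊗[ℂ] (Fin p₂ → ℂ)),
      (Module.finrank ℂ S : ℤ) = (p₁ : ℤ) * p₂ - p₁ - p₂ + 1 ∧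
      ∀ (v₁ : Fin p₁ → ℂ) (v₂ : Fin p₂ → ℂ),
        v₁ ⊗ₜ[ℂ] v₂ ∈ S → v₁ ⊗ₜ[ℂ] v₂ = 0 := by
  refine ⟨LinearMap.ker (ΦCE p₁ p₂), ?_, ?_⟩
  · have hrank := LinearMap.finrank_range_add_finrank_ker (ΦCE p₁ p₂)
    have hdom : Module.finrank ℂ ((Fin p₁ → ℂ) ⊗[ℂ] (Fin p₂ → ℂ)) = p₁ * p₂ := by
      rw [Module.finrank_tensorProduct]
      simp
    have hrange : Module.finrank ℂ (LinearMap.range (ΦCE p₁ p₂)) = p₁ + p₂ - 1 := by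
      rw [ΦCE_range p₁ p₂ h₁ h₂]
      rw [LinearEquiv.finrank_eq (Polynomial.degreeLTEquiv ℂ (p₁ + p₂ - 1))]
      simp
    rw [hdom, hrange] at hrank
    have hcast : ((Module.finrank ℂ (LinearMap.ker (ΦCE p₁ p₂)) : ℤ)) =
        (p₁ : ℤ) * p₂ - ((p₁ + p₂ - 1 : ℕ) : ℤ) := by
      omega
    rw [hcast]
    have : ((p₁ + p₂ - 1 : ℕ) : ℤ) = (p₁ : ℤ) + p₂ - 1 := by omega
    rw [this]; ring
  · intro v w hvw
    rw [LinearMap.mem_ker, ΦCE_tmul] at hvw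
    rcases mul_eq_zero.mp hvw with h | h
    · rw [toPolyCE_eq_zero h, TensorProduct.zero_tmul]
    · rw [toPolyCE_eq_zero h, TensorProduct.tmul_zero]
end

section
/- Let n_1, …, n_k ≥ 2 be integers, K = {1,…,k}, K_1, K_2 ⊆ K, m = ∏_{i∈K} n_i and m_t = ∏_{i∈K_t} n_i (with empty product equal to 1). If m ≥ ∑_{i∈K_1}(n_i − 1) + ∑_{j∈K_2}(n_j − 1) + 1, then there exists an m × (m_1 m_2) complex matrix M whose kernel contains no nonzero vector of the form (⊗_{i∈K_1} x_i) ⊗ (⊗_{j∈K_2} y_j) with x_i ∈ ℂ^{n_i}, y_j ∈ ℂ^{n_j}. -/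
open Polynomial in
/-- If `∏ n i ≥ ∑_{i∈K₁}(n i − 1) + ∑_{j∈K₂}(n j − 1) + 1`, there exists an
`m × (m₁ m₂)` matrix `M` whose kernel contains no nonzero vector of the form
`(⊗_{i∈K₁} x i) ⊗ (⊗_{j∈K₂} y j)`. -/
theorem stmt_6 (k : ℕ) (n : Fin k → ℕ) (hn : ∀ i, 2 ≤ n i)
    (K₁ K₂ : Finset (Fin k))
    (h : (∑ i ∈ K₁, (n i - 1)) + (∑ j ∈ K₂, (n j - 1)) + 1 ≤ ∏ i, n i) :
    ∃ M : Matrix (Fin (∏ i, n i))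
        (((i : {i // i ∈ K₁}) → Fin (n i.1)) × ((j : {j // j ∈ K₂}) → Fin (n j.1))) ℂ,
      ∀ (x : (i : {i // i ∈ K₁}) → (Fin (n i.1) → ℂ))
        (y : (j : {j // j ∈ K₂}) → (Fin (n j.1) → ℂ)),
        M.mulVec (fun p => (∏ i, x i (p.1 i)) * ∏ j, y j (p.2 j)) = 0 →
        (fun p : ((i : {i // i ∈ K₁}) → Fin (n i.1)) × ((j : {j // j ∈ K₂}) → Fin (n j.1)) =>
          (∏ i, x i (p.1 i)) * ∏ j, y j (p.2 j)) = 0 := by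
  classical
  refine ⟨fun t p => (t : ℂ) ^ ((∑ i, ((p.1 i : ℕ))) + ∑ j, ((p.2 j : ℕ))), ?_⟩
  intro x y hMv
  set P : {i // i ∈ K₁} → ℂ[X] := fun i => ∑ a : Fin (n i.1), C (x i a) * X ^ (a : ℕ) with hP
  set R : {j // j ∈ K₂} → ℂ[X] := fun j => ∑ b : Fin (n j.1), C (y j b) * X ^ (b : ℕ) with hR
  set Q : ℂ[X] := (∏ i, P i) * (∏ j, R j) with hQdef
  have hevalQ : ∀ c : ℂ, Q.eval c =
      ∑ p : ((i : {i // i ∈ K₁}) → Fin (n i.1)) × ((j : {j // j ∈ K₂}) → Fin (n j.1)),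
        c ^ ((∑ i, ((p.1 i : ℕ))) + ∑ j, ((p.2 j : ℕ))) *
          ((∏ i, x i (p.1 i)) * ∏ j, y j (p.2 j)) := by
    intro c
    have h1 : (∏ i, P i).eval c =
        ∑ p1 : (i : {i // i ∈ K₁}) → Fin (n i.1),
          (∏ i, x i (p1 i)) * c ^ (∑ i, ((p1 i : ℕ))) := by
      simp only [hP, eval_prod, eval_finset_sum, eval_mul, eval_C, eval_pow, eval_X]
      rw [Finset.prod_univ_sum, Fintype.piFinset_univ]
      refine Finset.sum_congr rfl fun p1 _ => ?_
      rw [Finset.prod_mul_distrib, Finset.prod_pow_eq_pow_sum]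
    have h2 : (∏ j, R j).eval c =
        ∑ p2 : (j : {j // j ∈ K₂}) → Fin (n j.1),
          (∏ j, y j (p2 j)) * c ^ (∑ j, ((p2 j : ℕ))) := by
      simp only [hR, eval_prod, eval_finset_sum, eval_mul, eval_C, eval_pow, eval_X]
      rw [Finset.prod_univ_sum, Fintype.piFinset_univ]
      refine Finset.sum_congr rfl fun p2 _ => ?_
      rw [Finset.prod_mul_distrib, Finset.prod_pow_eq_pow_sum]
    rw [hQdef, eval_mul, h1, h2, Finset.sum_mul_sum, Fintype.sum_prod_type]
    refine Finset.sum_congr rfl fun p1 _ => Finset.sum_congr rfl fun p2 _ => ?_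
    ring
  have hdeg : Q.natDegree < ∏ i, n i := by
    have hd1 : (∏ i, P i).natDegree ≤ ∑ i ∈ K₁, (n i - 1) := by
      refine le_trans (natDegree_prod_le _ _) ?_
      rw [← Finset.sum_coe_sort K₁ (fun i => n i - 1)]
      refine Finset.sum_le_sum fun i _ => ?_
      refine natDegree_sum_le_of_forall_le _ _ fun a _ => ?_
      refine le_trans (natDegree_C_mul_le _ _) ?_
      simpa using Nat.le_sub_one_of_lt (by simpa using a.2)
    have hd2 : (∏ j, R j).natDegree ≤ ∑ j ∈ K₂, (n j - 1) := by
      refine le_trans (natDegree_prod_le _ _) ?_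
      rw [← Finset.sum_coe_sort K₂ (fun j => n j - 1)]
      refine Finset.sum_le_sum fun j _ => ?_
      refine natDegree_sum_le_of_forall_le _ _ fun b _ => ?_
      refine le_trans (natDegree_C_mul_le _ _) ?_
      simpa using Nat.le_sub_one_of_lt (by simpa using b.2)
    calc Q.natDegree ≤ (∏ i, P i).natDegree + (∏ j, R j).natDegree := natDegree_mul_le
      _ ≤ (∑ i ∈ K₁, (n i - 1)) + ∑ j ∈ K₂, (n j - 1) := add_le_add hd1 hd2
      _ < ∏ i, n i := by omega
  have hQ0 : Q = 0 := by
    refine eq_zero_of_natDegree_lt_card_of_eval_eq_zero Q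
      (f := fun t : Fin (∏ i, n i) => (t : ℂ)) ?_ ?_ ?_
    · intro a b hab
      exact Fin.val_injective (Nat.cast_injective hab)
    · intro t
      have := congrFun hMv t
      simp only [Matrix.mulVec, dotProduct, Pi.zero_apply] at this
      rw [hevalQ]
      exact this
    · simpa using hdeg
  rcases mul_eq_zero.mp hQ0 with h0 | h0
  · obtain ⟨i0, -, hi0⟩ := Finset.prod_eq_zero_iff.mp h0
    have hx : ∀ a, x i0 a = 0 := by
      intro a
      have := congrArg (fun q => Polynomial.coeff q (a : ℕ)) hi0
      simpa [hP, finset_sum_coeff, coeff_C_mul, coeff_X_pow, Fin.val_eq_val] using this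
    funext p
    exact mul_eq_zero_of_left
      (Finset.prod_eq_zero (f := fun i => x i (p.1 i)) (Finset.mem_univ i0) (hx (p.1 i0))) _
  · obtain ⟨j0, -, hj0⟩ := Finset.prod_eq_zero_iff.mp h0
    have hy : ∀ b, y j0 b = 0 := by
      intro b
      have := congrArg (fun q => Polynomial.coeff q (b : ℕ)) hj0
      simpa [hR, finset_sum_coeff, coeff_C_mul, coeff_X_pow, Fin.val_eq_val] using this
    funext p
    exact mul_eq_zero_of_right _
      (Finset.prod_eq_zero (f := fun j => y j (p.2 j)) (Finset.mem_univ j0) (hy (p.2 j0)))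
end

section
/- Let (n_1, n_2) = (2,3) and let N be the 6 × 9 matrix with rows r_1 = e_1 − e_5, r_2 = e_2 − e_6, r_3 = e_3 − e_7, r_4 = e_4 − e_8, r_5 = −e_9, r_6 = 0 (in terms of the standard basis e_1,…,e_9 of ℂ⁹). Then Ker(N) = {(a,b,c,d,a,b,c,d,0)ᵀ : a,b,c,d ∈ ℂ}, and Ker(N) contains no nonzero vector of the form y ⊗ z with y, z ∈ ℂ³. -/
/-- Kronecker product of two vectors in `ℂ³`, as a vector in `ℂ⁹`
(`(y ⊗ z)_{3(i−1)+j} = y_i z_j`, zero-indexed). -/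
def kron33 (y z : Fin 3 → ℂ) : Fin 9 → ℂ :=
  fun i => y ⟨i.val / 3, by omega⟩ * z ⟨i.val % 3, by omega⟩

lemma kron_key (y0 y1 y2 z0 z1 z2 : ℂ)
    (h0 : y0 * z0 = y1 * z1) (h1 : y0 * z1 = y1 * z2) (h2 : y0 * z2 = y2 * z0)
    (h3 : y1 * z0 = y2 * z1) (h4 : y2 * z2 = 0) :
    y0 * z0 = 0 ∧ y0 * z1 = 0 ∧ y0 * z2 = 0 ∧ y1 * z0 = 0 ∧ y1 * z1 = 0 ∧
      y1 * z2 = 0 ∧ y2 * z0 = 0 ∧ y2 * z1 = 0 ∧ y2 * z2 = 0 := by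
  rcases eq_or_ne y0 0 with hy0 | hy0 <;>
  rcases eq_or_ne y1 0 with hy1 | hy1 <;>
  rcases eq_or_ne y2 0 with hy2 | hy2 <;>
  rcases eq_or_ne z0 0 with hz0 | hz0 <;>
  rcases eq_or_ne z1 0 with hz1 | hz1 <;>
  rcases eq_or_ne z2 0 with hz2 | hz2 <;>
  simp_all [mul_eq_zero]

/-- The kernel of the given `6 × 9` matrix `N` is
`{(a,b,c,d,a,b,c,d,0)ᵀ}`, and it contains no nonzero vector `y ⊗ z` with `y, z ∈ ℂ³`. -/
theorem stmt_14 :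
    let N : Matrix (Fin 6) (Fin 9) ℂ :=
      !![1, 0, 0, 0, -1, 0, 0, 0, 0;
         0, 1, 0, 0, 0, -1, 0, 0, 0;
         0, 0, 1, 0, 0, 0, -1, 0, 0;
         0, 0, 0, 1, 0, 0, 0, -1, 0;
         0, 0, 0, 0, 0, 0, 0, 0, -1;
         0, 0, 0, 0, 0, 0, 0, 0, 0]
    (∀ v : Fin 9 → ℂ, N.mulVec v = 0 ↔
        ∃ a b c d : ℂ, v = ![a, b, c, d, a, b, c, d, 0]) ∧
    (∀ y z : Fin 3 → ℂ, N.mulVec (kron33 y z) = 0 → kron33 y z = 0) := by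
  intro N
  constructor
  · intro v
    constructor
    · intro h
      have t0 := congrFun h 0
      have t1 := congrFun h 1
      have t2 := congrFun h 2
      have t3 := congrFun h 3
      have t4 := congrFun h 4
      simp [N, Matrix.mulVec, dotProduct, Fin.sum_univ_succ] at t0 t1 t2 t3 t4
      have e0 : v 0 + -(v 4) = 0 := t0
      have e1 : v 1 + -(v 5) = 0 := t1
      have e2 : v 2 + -(v 6) = 0 := t2
      have e3 : v 3 + -(v 7) = 0 := t3
      have e4 : v 8 = 0 := t4
      have f0 : v 4 = v 0 := by linear_combination -e0
      have f1 : v 5 = v 1 := by linear_combination -e1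
      have f2 : v 6 = v 2 := by linear_combination -e2
      have f3 : v 7 = v 3 := by linear_combination -e3
      refine ⟨v 0, v 1, v 2, v 3, ?_⟩
      funext i
      fin_cases i
      · rfl
      · rfl
      · rfl
      · rfl
      · exact f0
      · exact f1
      · exact f2
      · exact f3
      · exact e4
    · rintro ⟨a, b, c, d, rfl⟩
      funext i
      fin_cases i
      · show dotProduct ![1, 0, 0, 0, -1, 0, 0, 0, 0] ![a, b, c, d, a, b, c, d, 0] = 0
        simp [dotProduct, Fin.sum_univ_succ]
      · show dotProduct ![0, 1, 0, 0, 0, -1, 0, 0, 0] ![a, b, c, d, a, b, c, d, 0] = 0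
        simp [dotProduct, Fin.sum_univ_succ]
      · show dotProduct ![0, 0, 1, 0, 0, 0, -1, 0, 0] ![a, b, c, d, a, b, c, d, 0] = 0
        simp [dotProduct, Fin.sum_univ_succ]
      · show dotProduct ![0, 0, 0, 1, 0, 0, 0, -1, 0] ![a, b, c, d, a, b, c, d, 0] = 0
        simp [dotProduct, Fin.sum_univ_succ]
      · show dotProduct ![0, 0, 0, 0, 0, 0, 0, 0, -1] ![a, b, c, d, a, b, c, d, 0] = 0
        simp [dotProduct, Fin.sum_univ_succ]
      · show dotProduct ![0, 0, 0, 0, 0, 0, 0, 0, 0] ![a, b, c, d, a, b, c, d, 0] = 0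
        simp [dotProduct, Fin.sum_univ_succ]
  · intro y z h
    have t0 := congrFun h 0
    have t1 := congrFun h 1
    have t2 := congrFun h 2
    have t3 := congrFun h 3
    have t4 := congrFun h 4
    simp [N, Matrix.mulVec, dotProduct, Fin.sum_univ_succ] at t0 t1 t2 t3 t4
    have e0 : y 0 * z 0 + -(y 1 * z 1) = 0 := t0
    have e1 : y 0 * z 1 + -(y 1 * z 2) = 0 := t1
    have e2 : y 0 * z 2 + -(y 2 * z 0) = 0 := t2
    have e3 : y 1 * z 0 + -(y 2 * z 1) = 0 := t3
    have e4 : y 2 * z 2 = 0 := t4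
    obtain ⟨g0, g1, g2, g3, g4, g5, g6, g7, g8⟩ :=
      kron_key (y 0) (y 1) (y 2) (z 0) (z 1) (z 2)
        (by linear_combination e0) (by linear_combination e1)
        (by linear_combination e2) (by linear_combination e3) e4
    funext i
    fin_cases i
    · exact g0
    · exact g1
    · exact g2
    · exact g3
    · exact g4
    · exact g5
    · exact g6
    · exact g7
    · exact g8
end

section
/- The subspace S = {(a,b,c,d,a,b,c,d,0)ᵀ : a,b,c,d ∈ ℂ} ⊆ ℂ⁹ contains no nonzero vector of the form y ⊗ z with y, z ∈ ℂ³, and dim S = 4 = 9 − 3 − 3 + 1, so S is a completely entangled subspace of maximal dimension in ℂ³ ⊗ ℂ³. -/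
def fmap4 : (Fin 4 → ℂ) →ₗ[ℂ] (Fin 9 → ℂ) where
  toFun w := fun i =>
    if h : i.val < 4 then w ⟨i.val, h⟩
    else if h2 : i.val < 8 then w ⟨i.val - 4, by omega⟩ else 0
  map_add' u v := by
    funext i
    by_cases h : i.val < 4
    · simp [h]
    · by_cases h2 : i.val < 8 <;> simp [h, h2]
  map_smul' r v := by
    funext i
    by_cases h : i.val < 4
    · simp [h]
    · by_cases h2 : i.val < 8 <;> simp [h, h2]

lemma fmap4_inj : Function.Injective fmap4 := by
  rw [injective_iff_map_eq_zero]
  intro w h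
  funext i
  fin_cases i
  · exact congrFun h 0
  · exact congrFun h 1
  · exact congrFun h 2
  · exact congrFun h 3

/-- The subspace `S = {(a,b,c,d,a,b,c,d,0)ᵀ} ⊆ ℂ⁹` contains no nonzero decomposable
vector `y ⊗ z` with `y, z ∈ ℂ³`, and `dim S = 4 = 9 − 3 − 3 + 1`:
it is a completely entangled subspace of maximal dimension in `ℂ³ ⊗ ℂ³`. -/
theorem stmt_15 (S : Submodule ℂ (Fin 9 → ℂ))
    (hS : ∀ v : Fin 9 → ℂ, v ∈ S ↔ ∃ a b c d : ℂ, v = ![a, b, c, d, a, b, c, d, 0]) :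
    (∀ y z : Fin 3 → ℂ, kron33 y z ∈ S → kron33 y z = 0) ∧
    Module.finrank ℂ S = 4 ∧ 4 = 9 - 3 - 3 + 1 := by
  refine ⟨?_, ?_, rfl⟩
  · intro y z hm
    rw [hS] at hm
    obtain ⟨a, b, c, d, h⟩ := hm
    have h0 : y 0 * z 0 = a := congrFun h 0
    have h1 : y 0 * z 1 = b := congrFun h 1
    have h2 : y 0 * z 2 = c := congrFun h 2
    have h3 : y 1 * z 0 = d := congrFun h 3
    have h4 : y 1 * z 1 = a := congrFun h 4
    have h5 : y 1 * z 2 = b := congrFun h 5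
    have h6 : y 2 * z 0 = c := congrFun h 6
    have h7 : y 2 * z 1 = d := congrFun h 7
    have h8 : y 2 * z 2 = 0 := congrFun h 8
    have hc : c = 0 := mul_self_eq_zero.mp (by
      linear_combination (-(y 2 * z 0)) * h2 - c * h6 + (y 0 * z 0) * h8)
    have hb : b = 0 := mul_self_eq_zero.mp (by
      linear_combination (-(y 1 * z 2)) * h1 - b * h5 + (y 1 * z 1) * h2 + c * h4 + a * hc)
    have hd : d = 0 := mul_self_eq_zero.mp (by
      linear_combination (-(y 2 * z 1)) * h3 - d * h7 + (y 2 * z 0) * h4 + a * h6 + a * hc)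
    have ha : a = 0 := mul_self_eq_zero.mp (by
      linear_combination (-(y 1 * z 1)) * h0 - a * h4 + (y 1 * z 0) * h1 + b * h3 + b * hd)
    rw [h, ha, hb, hc, hd]
    funext i; fin_cases i <;> rfl
  · have hrange : S = LinearMap.range fmap4 := by
      ext v
      rw [hS, LinearMap.mem_range]
      constructor
      · rintro ⟨a, b, c, d, rfl⟩
        refine ⟨![a, b, c, d], ?_⟩
        funext i; fin_cases i <;> rfl
      · rintro ⟨w, rfl⟩
        refine ⟨w 0, w 1, w 2, w 3, ?_⟩
        funext i; fin_cases i <;> rfl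
    have e : (Fin 4 → ℂ) ≃ₗ[ℂ] S :=
      (LinearEquiv.ofInjective fmap4 fmap4_inj).trans
        (LinearEquiv.ofEq _ _ hrange.symm)
    rw [← e.finrank_eq]
    simp
end

section
/- Let M̂ ∈ M_n(ℂ) satisfy: (i) det(a I_n + b M̂) = aⁿ for all a, b ∈ ℂ, and (ii) Ker(M̂) contains no nonzero vector of the form y ⊗ z with y ∈ ℂ^p, z ∈ ℂ^q (where n = pq). Then the n × 2n matrix M = [I_n | M̂] has kernel containing no nonzero vector of the form x ⊗ y ⊗ z with x ∈ ℂ², y ∈ ℂ^p, z ∈ ℂ^q, under the identification ℂ^{2n} ≅ ℂ² ⊗ ℂ^n in which M(x ⊗ w) = (x_1 I_n + x_2 M̂) w for x = (x_1, x_2)ᵀ, w ∈ ℂ^n. -/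
/-- Let `M̂ ∈ M_n(ℂ)` (`n = pq`, with `ℂⁿ` indexed by `Fin p × Fin q`) satisfy
`det(a I + b M̂) = aⁿ` for all `a, b ∈ ℂ`, and suppose `Ker(M̂)` contains no nonzero
vector of the form `y ⊗ z`. Then the `n × 2n` matrix `M = [Iₙ | M̂]` has kernel
containing no nonzero vector of the form `x ⊗ y ⊗ z` with `x ∈ ℂ²`, `y ∈ ℂ^p`,
`z ∈ ℂ^q`. -/
theorem stmt_17 {p q : ℕ} (Mhat : Matrix (Fin p × Fin q) (Fin p × Fin q) ℂ)
    (hdet : ∀ a b : ℂ,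
      (a • (1 : Matrix (Fin p × Fin q) (Fin p × Fin q) ℂ) + b • Mhat).det = a ^ (p * q))
    (hker : ∀ (y : Fin p → ℂ) (z : Fin q → ℂ),
      Mhat.mulVec (fun w => y w.1 * z w.2) = 0 →
      (fun w : Fin p × Fin q => y w.1 * z w.2) = 0) :
    ∀ (x : Fin 2 → ℂ) (y : Fin p → ℂ) (z : Fin q → ℂ),
      (Matrix.of fun (r : Fin p × Fin q) (c : Fin 2 × (Fin p × Fin q)) =>
          if c.1 = 0 then (if r = c.2 then (1 : ℂ) else 0) else Mhat r c.2).mulVec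
        (fun t => x t.1 * (y t.2.1 * z t.2.2)) = 0 →
      (fun t : Fin 2 × (Fin p × Fin q) => x t.1 * (y t.2.1 * z t.2.2)) = 0 := by
  intro x y z h
  set v : Fin p × Fin q → ℂ := fun w => y w.1 * z w.2 with hv
  have key : ∀ r, x 0 * v r + x 1 * Mhat.mulVec v r = 0 := by
    intro r
    have h1 := congrFun h r
    simp only [Matrix.mulVec, dotProduct, Matrix.of_apply, Pi.zero_apply] at h1
    rw [Fintype.sum_prod_type, Fin.sum_univ_two] at h1
    have e0 : ((0 : Fin 2) = 0) = True := by simp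
    have e1 : ((1 : Fin 2) = 0) = False := by simp [Fin.ext_iff]
    simp only [e0, e1, if_true, if_false, ite_mul, one_mul, zero_mul,
      Finset.sum_ite_eq, Finset.mem_univ] at h1
    rw [← h1, Matrix.mulVec, dotProduct, Finset.mul_sum]
    congr 1
    exact Finset.sum_congr rfl fun w _ => by ring
  by_cases hv0 : v = 0
  · funext t
    have : v t.2 = 0 := by rw [hv0]; rfl
    simpa [hv] using Or.inr this
  · obtain ⟨w, hw⟩ := Function.ne_iff.mp hv0
    have hmv : (x 0 • (1 : Matrix (Fin p × Fin q) (Fin p × Fin q) ℂ)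
        + x 1 • Mhat).mulVec v = 0 := by
      funext r
      have := key r
      simp [Matrix.add_mulVec, Matrix.smul_mulVec, Matrix.one_mulVec, this]
    have hdet0 : (x 0 • (1 : Matrix (Fin p × Fin q) (Fin p × Fin q) ℂ)
        + x 1 • Mhat).det = 0 :=
      Matrix.exists_mulVec_eq_zero_iff.mp ⟨v, hv0, hmv⟩
    have hn : 0 < p * q := by
      rcases w with ⟨wp, wq⟩
      exact Nat.mul_pos wp.pos wq.pos
    have hx0 : x 0 = 0 :=
      pow_eq_zero_iff hn.ne' |>.mp ((hdet (x 0) (x 1)).symm.trans hdet0)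
    by_cases hx1 : x 1 = 0
    · funext t
      rcases t with ⟨i, w'⟩
      fin_cases i <;> simp [hx0, hx1]
    · exfalso
      have hMv : Mhat.mulVec v = 0 := by
        funext r
        have := key r
        rw [hx0] at this
        simp only [zero_mul, zero_add] at this
        simpa using (mul_eq_zero.mp this).resolve_left hx1
      exact hw (congrFun (hker y z hMv) w)
end

section
/- Let φ : M_{n_1 n_2}(ℂ) → M_{n_1 n_2}(ℂ) be defined by φ(A) = M A^R Nᵀ, where A^R is the realignment (an n_1² × n_2² matrix), M is n_1 n_2 × n_1², and N is n_1 n_2 × n_2². If Ker(M) ∩ (ℂ^{n_1} ⊗ ℂ^{n_1}) = {0} and Ker(N) ∩ (ℂ^{n_2} ⊗ ℂ^{n_2}) = {0}, then rank φ(A_1 ⊗ A_2) = 1 whenever rank(A_1 ⊗ A_2) = 1 for A_i ∈ M_{n_i}(ℂ). -/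
/-!
Realignment turns `A₁ ⊗ A₂` into the outer product `vec A₁ (vec A₂)ᵀ`, so
`φ(A₁ ⊗ A₂) = (M vec A₁) (N vec A₂)ᵀ`. If `A₁ ⊗ A₂` has rank one then each `Aᵢ = xᵢ yᵢᵀ`
is a nonzero outer product, so `vec Aᵢ = xᵢ ⊗ yᵢ` is a nonzero product vector; the kernel
hypotheses make `M vec A₁` and `N vec A₂` nonzero, and an outer product of nonzero vectors
has rank one.
-/

open Matrix
open scoped Kronecker

/-- The realignment of `A ∈ M_{n₁ n₂}(ℂ)`, an `n₁² × n₂²` matrix. -/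
def realign {n₁ n₂ : ℕ} (A : Matrix (Fin n₁ × Fin n₂) (Fin n₁ × Fin n₂) ℂ) :
    Matrix (Fin n₁ × Fin n₁) (Fin n₂ × Fin n₂) ℂ :=
  Matrix.of fun p q => A (p.1, q.1) (p.2, q.2)

namespace Matrix

variable {l m n p K : Type*}

section Rank

variable [Field K] [Fintype n]

theorem rank_eq_zero_iff {A : Matrix m n K} : A.rank = 0 ↔ A = 0 := by
  classical
  rw [rank, Submodule.finrank_eq_zero, LinearMap.range_eq_bot, ← toLin'_apply',
    LinearEquiv.map_eq_zero_iff]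

theorem rank_vecMulVec_of_ne_zero {w : m → K} {v : n → K} (hw : w ≠ 0) (hv : v ≠ 0) :
    (vecMulVec w v).rank = 1 := by
  have hpos : (vecMulVec w v).rank ≠ 0 := by
    obtain ⟨i, hi⟩ := Function.ne_iff.mp hw
    obtain ⟨j, hj⟩ := Function.ne_iff.mp hv
    exact fun h => mul_ne_zero hi hj (congrFun (congrFun (rank_eq_zero_iff.mp h) i) j)
  have := rank_vecMulVec_le w v
  omega

theorem exists_eq_vecMulVec_of_rank_eq_one {A : Matrix m n K} (h : A.rank = 1) :
    ∃ w : m → K, ∃ v : n → K, A = vecMulVec w v := by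
  rw [rank_eq_finrank_span_cols] at h
  obtain ⟨w, -, hspan⟩ := finrank_eq_one_iff'.mp h
  choose c hc using fun j => hspan ⟨A.col j, Submodule.subset_span ⟨j, rfl⟩⟩
  refine ⟨w, c, ext fun i j => ?_⟩
  rw [vecMulVec_apply, mul_comm]
  simpa using (congrFun (congrArg Subtype.val (hc j)) i).symm

end Rank

theorem mul_vecMulVec_mul_transpose [CommSemiring K] [Fintype m] [Fintype n]
    (A : Matrix l m K) (B : Matrix p n K) (u : m → K) (v : n → K) :
    A * vecMulVec u v * Bᵀ = vecMulVec (A *ᵥ u) (B *ᵥ v) := by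
  rw [mul_vecMulVec, vecMulVec_mul, vecMul_transpose]

section Kronecker

variable [Field K]

theorem exists_eq_vecMulVec_of_kronecker_eq_vecMulVec_left {A : Matrix l m K}
    {B : Matrix n p K} {w : l × n → K} {v : m × p → K} (h : A ⊗ₖ B = vecMulVec w v)
    (hB : B ≠ 0) : ∃ x : l → K, ∃ y : m → K, A = vecMulVec x y := by
  obtain ⟨j, k, hjk⟩ : ∃ j k, B j k ≠ 0 := by
    by_contra! h0
    exact hB (ext h0)
  refine ⟨fun i => w (i, j) / B j k, fun i' => v (i', k), ext fun i i' => ?_⟩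
  have := congrFun (congrFun h (i, j)) (i', k)
  simp only [kroneckerMap_apply, vecMulVec_apply] at this ⊢
  field_simp
  linear_combination this

theorem exists_eq_vecMulVec_of_kronecker_eq_vecMulVec_right {A : Matrix l m K}
    {B : Matrix n p K} {w : l × n → K} {v : m × p → K} (h : A ⊗ₖ B = vecMulVec w v)
    (hA : A ≠ 0) : ∃ x : n → K, ∃ y : p → K, B = vecMulVec x y := by
  obtain ⟨i, i', hii'⟩ : ∃ i i', A i i' ≠ 0 := by
    by_contra! h0
    exact hA (ext h0)
  refine ⟨fun j => w (i, j) / A i i', fun k => v (i', k), ext fun j k => ?_⟩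
  have := congrFun (congrFun h (i, j)) (i', k)
  simp only [kroneckerMap_apply, vecMulVec_apply] at this ⊢
  field_simp
  linear_combination this

end Kronecker

end Matrix

-- Mathlib's `vec` stacks columns; the row-major `vec` of the paper is `vec Aᵀ`.
theorem realign_kronecker {n₁ n₂ : ℕ} (A₁ : Matrix (Fin n₁) (Fin n₁) ℂ)
    (A₂ : Matrix (Fin n₂) (Fin n₂) ℂ) :
    realign (A₁ ⊗ₖ A₂) = vecMulVec (vec A₁ᵀ) (vec A₂ᵀ) :=
  rfl

/-- If `Ker(M) ∩ (ℂ^{n₁} ⊗ ℂ^{n₁}) = {0}` and `Ker(N) ∩ (ℂ^{n₂} ⊗ ℂ^{n₂}) = {0}`,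
then `φ(A) = M A^R Nᵀ` sends every rank-one `A₁ ⊗ A₂` to a rank-one matrix. -/
theorem stmt_18 {n₁ n₂ : ℕ}
    (M : Matrix (Fin (n₁ * n₂)) (Fin n₁ × Fin n₁) ℂ)
    (N : Matrix (Fin (n₁ * n₂)) (Fin n₂ × Fin n₂) ℂ)
    (hM : ∀ x y : Fin n₁ → ℂ,
      M.mulVec (fun p => x p.1 * y p.2) = 0 →
      (fun p : Fin n₁ × Fin n₁ => x p.1 * y p.2) = 0)
    (hN : ∀ x y : Fin n₂ → ℂ,
      N.mulVec (fun p => x p.1 * y p.2) = 0 →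
      (fun p : Fin n₂ × Fin n₂ => x p.1 * y p.2) = 0) :
    ∀ (A₁ : Matrix (Fin n₁) (Fin n₁) ℂ) (A₂ : Matrix (Fin n₂) (Fin n₂) ℂ),
      (A₁ ⊗ₖ A₂).rank = 1 → (M * realign (A₁ ⊗ₖ A₂) * Nᵀ).rank = 1 := by
  intro A₁ A₂ h
  obtain ⟨w, v, hwv⟩ := exists_eq_vecMulVec_of_rank_eq_one h
  have hne : A₁ ⊗ₖ A₂ ≠ 0 := by
    rintro h0
    simp [h0] at h
  have hA₁ : A₁ ≠ 0 := by
    rintro rfl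
    simp at hne
  have hA₂ : A₂ ≠ 0 := by
    rintro rfl
    simp at hne
  obtain ⟨x₁, y₁, rfl⟩ := exists_eq_vecMulVec_of_kronecker_eq_vecMulVec_left hwv hA₂
  obtain ⟨x₂, y₂, rfl⟩ := exists_eq_vecMulVec_of_kronecker_eq_vecMulVec_right hwv hA₁
  rw [realign_kronecker, mul_vecMulVec_mul_transpose]
  refine rank_vecMulVec_of_ne_zero (fun h0 => hA₁ ?_) (fun h0 => hA₂ ?_)
  · exact ext fun i k => congrFun (hM x₁ y₁ h0) (i, k)
  · exact ext fun j l => congrFun (hN x₂ y₂ h0) (j, l)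
end
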